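/- arXiv:2512.11164 — 4 statements merged into one kernel-verified Lean document; each statement's English description precedes it below -/
import Mathlib

section
/- Let G be a connected undirected unweighted graph on N vertices and let u be a vertex. Define fp_Bd(u) = (1/deg(u)) / (∑_{v} 1/deg(v)) and fp_dB(u) = deg(u) / (∑_{v} deg(v)). Then min(fp_Bd(u), fp_dB(u)) ≤ 1/N. -/
/-!
By Cauchy–Schwarz (AM–HM on the degree sequence), `N ^ 2 ≤ (∑ 1 / deg v) * (∑ deg v)`, and the
product `fp_Bd(u) * fp_dB(u)` is exactly the reciprocal of the right-hand side. So the two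
fixation probabilities have product at most `1 / N ^ 2`, and the smaller one is at most `1 / N`.
Connectivity makes every degree positive unless `G` has a single vertex, where `fp_Bd(u) = 0` because `1 / 0 = 0`.
-/

open Finset

lemma min_le_of_mul_le_sq_of_nonneg {a b c : ℝ} (hc : 0 ≤ c) (h : a * b ≤ c ^ 2) : min a b ≤ c := by
  by_contra! hlt
  have hca : c < a := lt_min_iff.mp hlt |>.1
  have hcb : c < b := lt_min_iff.mp hlt |>.2
  nlinarith [mul_lt_mul'' hca hcb hc hc]

lemma card_sq_le_sum_one_div_mul_sum {ι : Type*} (s : Finset ι) {d : ι → ℝ}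
    (hd : ∀ i ∈ s, 0 < d i) : (#s : ℝ) ^ 2 ≤ (∑ i ∈ s, 1 / d i) * ∑ i ∈ s, d i := by
  simpa using sum_sq_le_sum_mul_sum_of_sq_le_mul s (r := fun _ ↦ 1)
    (fun i hi ↦ (one_div_pos.mpr (hd i hi)).le) (fun i hi ↦ (hd i hi).le)
    (fun i hi ↦ by rw [one_pow, one_div_mul_cancel (hd i hi).ne'])

lemma min_one_div_share_share_le {ι : Type*} [Fintype ι] {d : ι → ℝ} (hd : ∀ i, 0 < d i)
    (i : ι) :
    min ((1 / d i) / ∑ j, 1 / d j) (d i / ∑ j, d j) ≤ 1 / Fintype.card ι := by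
  have : Nonempty ι := ⟨i⟩
  apply min_le_of_mul_le_sq_of_nonneg (by positivity)
  rw [div_mul_div_comm, one_div_mul_cancel (hd i).ne', div_pow, one_pow]
  exact one_div_le_one_div_of_le (by positivity)
    (by simpa using card_sq_le_sum_one_div_mul_sum univ fun j _ ↦ hd j)

theorem stmt_0_general {V : Type*} [Fintype V] (G : SimpleGraph V)
    [DecidableRel G.Adj] (hconn : G.Connected) (u : V)
    (N : ℕ) (hN : N = Fintype.card V)
    (fpBd fpdB : V → ℝ)
    (hBd : ∀ w : V, fpBd w =
      (1 / (G.degree w : ℝ)) / (∑ v : V, 1 / (G.degree v : ℝ)))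
    (hdB : ∀ w : V, fpdB w =
      (G.degree w : ℝ) / (∑ v : V, (G.degree v : ℝ))) :
    min (fpBd u) (fpdB u) ≤ 1 / (N : ℝ) := by
  subst hN
  rw [hBd, hdB]
  rcases subsingleton_or_nontrivial V with hV | hV
  · have hdeg : G.degree u = 0 := Nat.lt_one_iff.mp <|
      (G.degree_lt_card_verts u).trans_le (Fintype.card_le_one_iff_subsingleton.mpr hV)
    exact min_le_of_left_le (by rw [hdeg]; simp)
  · exact min_one_div_share_share_le (d := fun v ↦ (G.degree v : ℝ))
      (fun v ↦ mod_cast hconn.preconnected.degree_pos_of_nontrivial v) u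

/-- On a connected graph, min of the Bd and dB neutral fixation probabilities
of a single mutant at `u` is at most `1/N`. -/
theorem stmt_0 {V : Type*} [Fintype V] [DecidableEq V] (G : SimpleGraph V)
    [DecidableRel G.Adj] (hconn : G.Connected) (u : V)
    (N : ℕ) (hN : N = Fintype.card V)
    (fpBd fpdB : V → ℝ)
    (hBd : ∀ w : V, fpBd w =
      (1 / (G.degree w : ℝ)) / (∑ v : V, 1 / (G.degree v : ℝ)))
    (hdB : ∀ w : V, fpdB w =
      (G.degree w : ℝ) / (∑ v : V, (G.degree v : ℝ))) :
    min (fpBd u) (fpdB u) ≤ 1 / (N : ℝ) :=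
  stmt_0_general G hconn u N hN fpBd fpdB hBd hdB
end

section
/- Let G=(V,E) be an undirected unweighted graph on N ≥ 2 vertices, r > 1, and let S ⊆ V with S ≠ ∅, S ≠ V, u ∈ S, v ∉ S, where both deg(u), deg(v) ≥ 1 and deg(u), deg(v) ≤ N. Let w(S) = N + (r−1)|S| and let w_u(S), w_v(S) ∈ [deg(u), r·deg(u)] and [deg(v), r·deg(v)] respectively. Then (1/2)·[ (1/w(S))·(r/deg(u) − 1/deg(v)) + (1/N)·(r/w_v(S) − 1/w_u(S)) ] ≥ (r−1)/(r·N³). -/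
/-!
Write `a = 1/deg u`, `b = 1/deg v`. Since `w_u ≥ deg u` and `w_v ≤ r deg v`, the second bracket is at
least `b - a`, so twice the drift is at least `t (r a - b) + (b - a)/N` with `t = 1/w ∈ [1/(rN), 1/N]`.
This is affine in `t`, hence at least its value at an endpoint: `(r - 1) a / N` at `t = 1/N` and
`(r - 1) b / (r N)` at `t = 1/(rN)`. As `a, b ≥ 1/N`, both are at least `(r - 1)/(r N²)`, and
`N ≥ 2` absorbs the factor `1/2` into `1/N`.
-/

lemma min_le_affine_of_mem_Icc {a b t α β : ℝ} (ht : t ∈ Set.Icc a b) :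
    min (a * α + β) (b * α + β) ≤ t * α + β := by
  obtain ⟨hat, htb⟩ := ht
  rcases le_total 0 α with hα | hα
  · exact min_le_of_left_le (by nlinarith)
  · exact min_le_of_right_le (by nlinarith)

lemma one_div_sub_one_div_le_div_sub_one_div {r du dv wu wv : ℝ} (hdu : 0 < du) (hdv : 0 < dv)
    (hwu : du ≤ wu) (hwv1 : dv ≤ wv) (hwv2 : wv ≤ r * dv) :
    1 / dv - 1 / du ≤ r / wv - 1 / wu := by
  have hv : 1 / dv ≤ r / wv := by
    rw [div_le_div_iff₀ hdv (hdv.trans_le hwv1)]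
    linarith
  have hu : 1 / wu ≤ 1 / du := one_div_le_one_div_of_le hdu hwu
  linarith

lemma div_mul_sq_le_drift {n r w du dv : ℝ} (hr : 1 ≤ r) (hdu : 0 < du) (hduN : du ≤ n)
    (hdv : 0 < dv) (hdvN : dv ≤ n) (hw1 : n ≤ w) (hw2 : w ≤ r * n) :
    (r - 1) / (r * n ^ 2) ≤ 1 / w * (r / du - 1 / dv) + 1 / n * (1 / dv - 1 / du) := by
  have hn : 0 < n := hdu.trans_le hduN
  have hr0 : 0 < r := by linarith
  have ht : 1 / w ∈ Set.Icc (1 / (r * n)) (1 / n) :=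
    ⟨one_div_le_one_div_of_le (hn.trans_le hw1) hw2, one_div_le_one_div_of_le hn hw1⟩
  have hmin := min_le_affine_of_mem_Icc (α := r / du - 1 / dv) (β := 1 / n * (1 / dv - 1 / du)) ht
  have hlow :
      1 / (r * n) * (r / du - 1 / dv) + 1 / n * (1 / dv - 1 / du) = (r - 1) / (r * n * dv) := by
    field_simp; ring
  have hhigh : 1 / n * (r / du - 1 / dv) + 1 / n * (1 / dv - 1 / du) = (r - 1) / (n * du) := by
    field_simp; ring
  rw [hlow, hhigh] at hmin
  refine le_trans (le_min ?_ ?_) hmin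
  · exact div_le_div_of_nonneg_left (by linarith) (by positivity) (by nlinarith)
  · exact div_le_div_of_nonneg_left (by linarith) (by positivity) (by nlinarith)

theorem stmt_8_general (N : ℕ) (hN : 2 ≤ N) (r : ℝ) (hr : 1 < r)
    (degu degv : ℝ) (hdu1 : 1 ≤ degu) (hduN : degu ≤ (N : ℝ))
    (hdv1 : 1 ≤ degv) (hdvN : degv ≤ (N : ℝ))
    (w : ℝ) (hw1 : (N : ℝ) - 1 + r ≤ w) (hw2 : w ≤ ((N : ℝ) - 1) * r + 1)
    (wu wv : ℝ) (hwu1 : degu ≤ wu)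
    (hwv1 : degv ≤ wv) (hwv2 : wv ≤ r * degv) :
    (1 / 2) * ((1 / w) * (r / degu - 1 / degv)
      + (1 / (N : ℝ)) * (r / wv - 1 / wu))
      ≥ (r - 1) / (r * (N : ℝ) ^ 3) := by
  have hN2 : (2 : ℝ) ≤ N := by exact_mod_cast hN
  have hdu : 0 < degu := by linarith
  have hdv : 0 < degv := by linarith
  have hdrift := div_mul_sq_le_drift (w := w) hr.le hdu hduN hdv hdvN (by linarith) (by nlinarith)
  have hsecond : 1 / (N : ℝ) * (1 / degv - 1 / degu) ≤ 1 / (N : ℝ) * (r / wv - 1 / wu) :=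
    mul_le_mul_of_nonneg_left
      (one_div_sub_one_div_le_div_sub_one_div hdu hdv hwu1 hwv1 hwv2) (by positivity)
  have hhalf : (r - 1) / (r * (N : ℝ) ^ 3) ≤ 1 / 2 * ((r - 1) / (r * (N : ℝ) ^ 2)) := by
    rw [← mul_div_assoc, div_le_div_iff₀ (by positivity) (by positivity)]
    have : 0 ≤ (r - 1) * r * (N : ℝ) ^ 2 := by have := hr.le; positivity
    nlinarith
  linarith

/-- Drift lower bound at `δ = 1/2` for the potential `φ(S) = |S|`. -/
theorem stmt_8 (N : ℕ) (hN : 2 ≤ N) (r : ℝ) (hr : 1 < r)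
    (degu degv : ℝ) (hdu1 : 1 ≤ degu) (hduN : degu ≤ (N : ℝ))
    (hdv1 : 1 ≤ degv) (hdvN : degv ≤ (N : ℝ))
    (w : ℝ) (hw1 : (N : ℝ) - 1 + r ≤ w) (hw2 : w ≤ ((N : ℝ) - 1) * r + 1)
    (wu wv : ℝ) (hwu1 : degu ≤ wu) (hwu2 : wu ≤ r * degu)
    (hwv1 : degv ≤ wv) (hwv2 : wv ≤ r * degv) :
    (1 / 2) * ((1 / w) * (r / degu - 1 / degv)
      + (1 / (N : ℝ)) * (r / wv - 1 / wu))
      ≥ (r - 1) / (r * (N : ℝ) ^ 3) :=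
  stmt_8_general N hN r hr degu degv hdu1 hduN hdv1 hdvN w hw1 hw2 wu wv hwu1 hwv1 hwv2
end

section
/- Let r ≥ λ² with λ > 1, and let N ≥ 2. Suppose positive reals d_u, d_v satisfy 1 ≤ d_u, d_v ≤ N and d_u/d_v ≤ λ, and let w be a real with N−1+r ≤ w ≤ (N−1)r+1. Then (1/w)·(r/d_u − 1/d_v) ≥ (r−λ)/(r·N²) ≥ (r−1)/(r·N³). -/
/-!
Since `d_u ≤ λ d_v`, we have `1 / d_v ≤ λ / d_u`, so `r / d_u - 1 / d_v ≥ (r - λ) / d_u ≥ (r - λ) / N`;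
together with `w ≤ (N - 1) r + 1 ≤ r N` this gives the first bound. The second one is
`r - 1 ≤ 2 (r - λ) ≤ N (r - λ)`, where the first step is `(λ - 1)² ≥ 0` combined with `λ² ≤ r`.
-/

section

variable {K : Type*} [Field K] [LinearOrder K] [IsStrictOrderedRing K]

theorem sub_div_le_div_sub_one_div_of_div_le {a b c r : K} (ha : 0 < a) (hb : 0 < b)
    (h : a / b ≤ c) : (r - c) / a ≤ r / a - 1 / b := by
  have hinv : 1 / b ≤ c / a := by
    rw [div_le_div_iff₀ hb ha]
    rw [div_le_iff₀ hb] at h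
    linarith
  rw [sub_div]
  linarith

theorem sub_one_le_two_mul_sub_of_sq_le {c r : K} (h : c ^ 2 ≤ r) : r - 1 ≤ 2 * (r - c) := by
  nlinarith [sq_nonneg (c - 1)]

end

theorem stmt_9_general (lam r : ℝ) (hlam : 1 < lam) (hr : lam ^ 2 ≤ r)
    (N : ℕ) (hN : 2 ≤ N)
    (du dv : ℝ) (hdu1 : 1 ≤ du) (hduN : du ≤ (N : ℝ))
    (hdv1 : 1 ≤ dv) (hratio : du / dv ≤ lam)
    (w : ℝ) (hw1 : (N : ℝ) - 1 + r ≤ w) (hw2 : w ≤ ((N : ℝ) - 1) * r + 1) :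
    (1 / w) * (r / du - 1 / dv) ≥ (r - lam) / (r * (N : ℝ) ^ 2) ∧
    (r - lam) / (r * (N : ℝ) ^ 2) ≥ (r - 1) / (r * (N : ℝ) ^ 3) := by
  have hN2 : (2 : ℝ) ≤ N := by exact_mod_cast hN
  have hlam_r : lam ≤ r := by nlinarith
  have hr0 : 0 < r := by linarith
  have hw0 : 0 < w := by linarith
  have hw_le : w ≤ r * N := by nlinarith
  constructor
  · have hdrift : (r - lam) / N ≤ r / du - 1 / dv :=
      (div_le_div_of_nonneg_left (by linarith) (by linarith) hduN).trans
        (sub_div_le_div_sub_one_div_of_div_le (by linarith) (by linarith) hratio)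
    calc (r - lam) / (r * (N : ℝ) ^ 2) = 1 / (r * N) * ((r - lam) / N) := by
          field_simp
      _ ≤ 1 / w * (r / du - 1 / dv) :=
          mul_le_mul (one_div_le_one_div_of_le hw0 hw_le) hdrift
            (div_nonneg (by linarith) (by linarith)) (by positivity)
  · have hkey : r - 1 ≤ (r - lam) * N := by
      nlinarith [sub_one_le_two_mul_sub_of_sq_le hr]
    calc (r - 1) / (r * (N : ℝ) ^ 3) ≤ (r - lam) * N / (r * (N : ℝ) ^ 3) := by
          gcongr
      _ = (r - lam) / (r * (N : ℝ) ^ 2) := by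
          field_simp

/-- Bd drift lower bound on a `λ`-almost regular graph. -/
theorem stmt_9 (lam r : ℝ) (hlam : 1 < lam) (hr : lam ^ 2 ≤ r)
    (N : ℕ) (hN : 2 ≤ N)
    (du dv : ℝ) (hdu1 : 1 ≤ du) (hduN : du ≤ (N : ℝ))
    (hdv1 : 1 ≤ dv) (hdvN : dv ≤ (N : ℝ)) (hratio : du / dv ≤ lam)
    (w : ℝ) (hw1 : (N : ℝ) - 1 + r ≤ w) (hw2 : w ≤ ((N : ℝ) - 1) * r + 1) :
    (1 / w) * (r / du - 1 / dv) ≥ (r - lam) / (r * (N : ℝ) ^ 2) ∧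
    (r - lam) / (r * (N : ℝ) ^ 2) ≥ (r - 1) / (r * (N : ℝ) ^ 3) :=
  stmt_9_general lam r hlam hr N hN du dv hdu1 hduN hdv1 hratio w hw1 hw2
end

section
/- Let r > 1, N ≥ 2, and let d_u, d_v be integers with 1 ≤ d_u, d_v ≤ N−1. Let w_u ∈ [d_u, d_u + r − 1] and w_v ∈ [r·d_v − r + 1, r·d_v] be reals representing neighborhood fitness sums. If either w_u ≥ d_u + r − 1 or w_v ≤ r·d_v − r + 1 (i.e., u has a mutant neighbor or v has a wild-type neighbor), then (1/N)·(r·d_v/w_v − d_u/w_u) ≥ (r−1)/(r·N²). -/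
/-!
If `u` has a mutant neighbour then `w_u ≥ d_u + r - 1`, so `d_u / w_u` falls short of `1` by at least
`(r - 1) / (d_u + r - 1)`, while `r d_v / w_v ≥ 1`. Symmetrically, if `v` has a wild-type neighbour then
`r d_v / w_v` exceeds `1` by at least `(r - 1) / (r d_v - r + 1)`, while `d_u / w_u ≤ 1`. Both
denominators are at most `r N` because the degrees are at most `N - 1`.
-/

lemma le_div_sub_div_of_add_sub_one_le {r N du dv wu wv : ℝ} (hr : 1 < r) (hdu : 1 ≤ du)
    (hduN : du ≤ N - 1) (hwv : 0 < wv) (hwv_le : wv ≤ r * dv) (hwu : du + r - 1 ≤ wu) :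
    (r - 1) / (r * N) ≤ r * dv / wv - du / wu := by
  have hden : 0 < du + r - 1 := by linarith
  calc (r - 1) / (r * N) ≤ (r - 1) / (du + r - 1) :=
        div_le_div_of_nonneg_left (by linarith) hden (by nlinarith)
    _ = 1 - du / (du + r - 1) := by field_simp; ring
    _ ≤ r * dv / wv - du / wu :=
        sub_le_sub ((one_le_div hwv).2 hwv_le) (div_le_div_of_nonneg_left (by linarith) hden hwu)

lemma le_div_sub_div_of_le_mul_sub_add_one {r N du dv wu wv : ℝ} (hr : 1 < r) (hdv : 1 ≤ dv)
    (hdvN : dv ≤ N - 1) (hwu : 0 < wu) (hdu_le : du ≤ wu) (hwv_ge : r * dv - r + 1 ≤ wv)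
    (hwv : wv ≤ r * dv - r + 1) :
    (r - 1) / (r * N) ≤ r * dv / wv - du / wu := by
  have hden : 0 < r * dv - r + 1 := by nlinarith
  calc (r - 1) / (r * N) ≤ (r - 1) / (r * dv - r + 1) :=
        div_le_div_of_nonneg_left (by linarith) hden (by nlinarith)
    _ = r * dv / (r * dv - r + 1) - 1 := by
        rw [eq_sub_iff_add_eq, div_add_one hden.ne']; ring_nf
    _ ≤ r * dv / wv - du / wu :=
        sub_le_sub (div_le_div_of_nonneg_left (by positivity) (hden.trans_le hwv_ge) hwv)
          ((div_le_one hwu).2 hdu_le)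

theorem stmt_10_general (r : ℝ) (hr : 1 < r) (N : ℕ)
    (du dv : ℤ) (hdu1 : 1 ≤ du) (hduN : du ≤ (N : ℤ) - 1)
    (hdv1 : 1 ≤ dv) (hdvN : dv ≤ (N : ℤ) - 1)
    (wu wv : ℝ) (hwu1 : (du : ℝ) ≤ wu)
    (hwv1 : r * (dv : ℝ) - r + 1 ≤ wv) (hwv2 : wv ≤ r * (dv : ℝ))
    (hcase : (du : ℝ) + r - 1 ≤ wu ∨ wv ≤ r * (dv : ℝ) - r + 1) :
    (1 / (N : ℝ)) * (r * (dv : ℝ) / wv - (du : ℝ) / wu)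
      ≥ (r - 1) / (r * (N : ℝ) ^ 2) := by
  have hdu : (1 : ℝ) ≤ du := by exact_mod_cast hdu1
  have hdv : (1 : ℝ) ≤ dv := by exact_mod_cast hdv1
  have hduN' : (du : ℝ) ≤ N - 1 := by exact_mod_cast hduN
  have hdvN' : (dv : ℝ) ≤ N - 1 := by exact_mod_cast hdvN
  have hwv : 0 < wv := by nlinarith
  have key : (r - 1) / (r * N) ≤ r * dv / wv - du / wu :=
    hcase.elim (le_div_sub_div_of_add_sub_one_le hr hdu hduN' hwv hwv2)
      (le_div_sub_div_of_le_mul_sub_add_one hr hdv hdvN' (by linarith) hwu1 hwv1)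
  rw [ge_iff_le, show (r - 1) / (r * (N : ℝ) ^ 2) = 1 / N * ((r - 1) / (r * N)) by ring]
  exact mul_le_mul_of_nonneg_left key (by positivity)

/-- dB-step drift bound with the degree-weighted potential. -/
theorem stmt_10 (r : ℝ) (hr : 1 < r) (N : ℕ) (hN : 2 ≤ N)
    (du dv : ℤ) (hdu1 : 1 ≤ du) (hduN : du ≤ (N : ℤ) - 1)
    (hdv1 : 1 ≤ dv) (hdvN : dv ≤ (N : ℤ) - 1)
    (wu wv : ℝ) (hwu1 : (du : ℝ) ≤ wu) (hwu2 : wu ≤ (du : ℝ) + r - 1)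
    (hwv1 : r * (dv : ℝ) - r + 1 ≤ wv) (hwv2 : wv ≤ r * (dv : ℝ))
    (hcase : (du : ℝ) + r - 1 ≤ wu ∨ wv ≤ r * (dv : ℝ) - r + 1) :
    (1 / (N : ℝ)) * (r * (dv : ℝ) / wv - (du : ℝ) / wu)
      ≥ (r - 1) / (r * (N : ℝ) ^ 2) :=
  stmt_10_general r hr N du dv hdu1 hduN hdv1 hdvN wu wv hwu1 hwv1 hwv2 hcase
end
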